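/- Let (X, ⪯) be a countably infinite totally ordered set. Suppose that X has no isolated points and that either X does not have a maximum or X does not have a minimum. Then there exists a binary bijection f : ℚ → X. -/

import Mathlib

/-- The 2-adic order of a rational number, with `ord2 0 = ⊤`. -/
noncomputable def ord2 (q : ℚ) : WithTop ℤ :=
  if q = 0 then ⊤ else (padicValRat 2 q : WithTop ℤ)

/-!
A map `f : ℚ → X` is binary exactly when it sends every `2`-adic ball to an order-convex set:
since the residue field of `ℚ₂` is `𝔽₂`, every triple of rationals has a unique closest pair,
and the third point is at the same distance from both of its points.

We build `f` by back-and-forth through finite binary partial bijections. A new rational `q` has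
to be sent next to the values of the block of points of the domain `2`-adically nearest to `q`,
into one of the two gaps of `X` bounding them. Such a gap is empty only when it is closed by an
endpoint of `X` or by a jump `x ⋖ x'` between values, and the invariant `GapsOpen` says that the
two gaps around a block are never both closed from outside the smallest ball containing it. It
survives both kinds of extension: a value forming no jump is put in the middle of a gap, a value
forming a jump with an existing value is attached to a rational closer to that value than any
two points of the domain (so the new jump is tighter than every block it bounds), and a value
beyond the whole image is attached to a rational far from the whole domain.
-/

open OrderDual Topology

lemma ord2_zero : ord2 0 = ⊤ := if_pos rfl

lemma ord2_eq_top {q : ℚ} : ord2 q = ⊤ ↔ q = 0 := by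
  unfold ord2; split_ifs with h <;> simp [h]

lemma ord2_of_ne_zero {q : ℚ} (hq : q ≠ 0) : ord2 q = padicValRat 2 q := if_neg hq

lemma ord2_eq_addValuation (q : ℚ) : ord2 q = Padic.addValuation (q : ℚ_[2]) := by
  rcases eq_or_ne q 0 with rfl | hq
  · simp [ord2]
  · rw [ord2_of_ne_zero hq, Padic.addValuation.apply (by exact_mod_cast hq),
      Padic.valuation_ratCast]

lemma ord2_sub_comm (a b : ℚ) : ord2 (a - b) = ord2 (b - a) := by
  simp only [ord2_eq_addValuation, Rat.cast_sub, AddValuation.map_sub_swap]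

lemma min_ord2_sub_le (a b c : ℚ) : min (ord2 (a - b)) (ord2 (b - c)) ≤ ord2 (a - c) := by
  simpa only [ord2_eq_addValuation, Rat.cast_sub, sub_add_sub_cancel] using
    Padic.addValuation.map_add ((a : ℚ_[2]) - (b : ℚ_[2])) (b - c)

lemma ord2_sub_eq_of_lt {a b c : ℚ} (h : ord2 (a - b) < ord2 (b - c)) :
    ord2 (a - c) = ord2 (a - b) := by
  simp only [ord2_eq_addValuation, Rat.cast_sub] at h ⊢
  rw [← sub_add_sub_cancel (a : ℚ_[2]) b c, AddValuation.map_add_eq_of_lt_left _ h]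

lemma one_le_padicValRat_one_add {u : ℚ} (hu0 : u ≠ 0) (hu : padicValRat 2 u = 0)
    (hu1 : 1 + u ≠ 0) : 1 ≤ padicValRat 2 (1 + u) := by
  have hval : padicValInt 2 u.num = padicValNat 2 u.den := by
    have := padicValRat_def 2 u; omega
  have hnum_den : ¬ ((2 : ℤ) ∣ u.num ∧ 2 ∣ u.den) := fun ⟨h₁, h₂⟩ =>
    Nat.not_coprime_of_dvd_of_dvd one_lt_two (Int.ofNat_dvd_left.mp h₁) h₂ u.reduced
  have hden : ¬ 2 ∣ u.den := fun h₂ => by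
    have h₁ := one_le_padicValNat_of_dvd u.den_nz h₂
    rw [padicValInt.eq_zero_of_not_dvd fun h => hnum_den ⟨h, h₂⟩] at hval
    omega
  have hnum : ¬ (2 : ℤ) ∣ u.num := fun h₁ => by
    have h₂ := ((padicValInt_dvd_iff (p := 2) 1 u.num).1 (by simpa using h₁)).resolve_left
      (Rat.num_ne_zero.2 hu0)
    rw [padicValNat.eq_zero_of_not_dvd hden] at hval
    omega
  have hsum : 1 + u = ((u.den + u.num : ℤ) : ℚ) / ((u.den : ℤ) : ℚ) := by
    rw [Int.cast_add, add_div, div_self (by simp), Int.cast_natCast, Rat.num_div_den]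
  have hsum0 : (u.den + u.num : ℤ) ≠ 0 := by
    rintro h; simp [h] at hsum; exact hu1 hsum
  have heven : 1 ≤ padicValInt 2 (u.den + u.num) :=
    ((padicValInt_dvd_iff (p := 2) 1 _).1 (by simp only [pow_one]; omega)).resolve_left hsum0
  rw [hsum, padicValRat.div (by exact_mod_cast hsum0) (by simp), padicValRat.of_int,
    padicValRat.of_int, padicValInt.eq_zero_of_not_dvd (z := (u.den : ℤ)) (by exact_mod_cast hden)]
  omega

/-- The residue field of `ℚ₂` is `𝔽₂`, so two summands of equal valuation cancel to first order. -/
lemma ord2_lt_ord2_add {x y : ℚ} (hx : x ≠ 0) (h : ord2 x = ord2 y) : ord2 x < ord2 (x + y) := by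
  have hy : y ≠ 0 := by
    rintro rfl; exact hx (ord2_eq_top.1 (h.trans ord2_zero))
  rcases eq_or_ne (x + y) 0 with hxy | hxy
  · rw [hxy, ord2_zero, ord2_of_ne_zero hx]; exact WithTop.coe_lt_top _
  have hu : padicValRat 2 (y / x) = 0 := by
    rw [ord2_of_ne_zero hx, ord2_of_ne_zero hy, WithTop.coe_inj] at h
    rw [padicValRat.div hy hx, h, sub_self]
  have hxy' : x + y = x * (1 + y / x) := by field_simp
  have h1 : 1 + y / x ≠ 0 := by rintro h0; rw [h0, mul_zero] at hxy'; exact hxy hxy'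
  rw [ord2_of_ne_zero hx, ord2_of_ne_zero hxy, hxy', padicValRat.mul hx h1, WithTop.coe_lt_coe]
  linarith [one_le_padicValRat_one_add (div_ne_zero hy hx) hu h1]

lemma ord2_sub_lt_of_eq {a b c : ℚ} (hab : a ≠ b) (h : ord2 (a - b) = ord2 (b - c)) :
    ord2 (a - b) < ord2 (a - c) := by
  simpa only [sub_add_sub_cancel] using ord2_lt_ord2_add (sub_ne_zero.2 hab) h

lemma ord2_add_two_zpow_sub_self (a : ℚ) (k : ℤ) : ord2 (a + 2 ^ k - a) = k := by
  have h2 : padicValRat 2 2 = 1 := by simpa using padicValRat.self (p := 2) one_lt_two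
  rw [add_sub_cancel_left, ord2_of_ne_zero (zpow_ne_zero k two_ne_zero), padicValRat.zpow, h2,
    mul_one]

lemma ord2_add_two_zpow_sub_of_lt {a s : ℚ} {k : ℤ} (h : ord2 (a - s) < k) :
    ord2 (a + 2 ^ k - s) = ord2 (a - s) := by
  have := ord2_sub_eq_of_lt (a := s) (b := a) (c := a + 2 ^ k)
    (by rwa [ord2_sub_comm s a, ord2_sub_comm a (a + 2 ^ k), ord2_add_two_zpow_sub_self])
  rwa [ord2_sub_comm s (a + 2 ^ k), ord2_sub_comm s a] at this

lemma ord2_add_two_zpow_sub_of_gt {a s : ℚ} {k : ℤ} (h : k < ord2 (a - s)) :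
    ord2 (a + 2 ^ k - s) = k := by
  rw [ord2_sub_eq_of_lt (b := a) (by rwa [ord2_add_two_zpow_sub_self]),
    ord2_add_two_zpow_sub_self]

lemma exists_ord2_sub_lt (s : Finset ℚ) :
    ∃ k : ℤ, ∀ x ∈ s, ∀ y ∈ s, x ≠ y → ord2 (x - y) < k := by
  obtain ⟨k, hk⟩ := ((s ×ˢ s).image fun xy => padicValRat 2 (xy.1 - xy.2)).bddAbove
  refine ⟨k + 1, fun x hx y hy hxy => ?_⟩
  have hxy' : (x, y) ∈ s ×ˢ s := Finset.mem_product.2 ⟨hx, hy⟩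
  rw [ord2_of_ne_zero (sub_ne_zero.2 hxy), WithTop.coe_lt_coe]
  exact (hk (Finset.mem_image_of_mem _ hxy')).trans_lt (lt_add_one k)

lemma exists_ord2_sub_eq (s : Finset ℚ) :
    ∃ q : ℚ, ∃ k : ℤ, (∀ x ∈ s, ord2 (q - x) = k) ∧
      ∀ x ∈ s, ∀ y ∈ s, x ≠ y → (k : WithTop ℤ) < ord2 (x - y) := by
  obtain ⟨k, hk⟩ := ((s ×ˢ s).image fun xy => padicValRat 2 (xy.1 - xy.2)).bddBelow
  have hlt : ∀ x ∈ s, ∀ y ∈ s, x ≠ y → ((k - 1 : ℤ) : WithTop ℤ) < ord2 (x - y) := by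
    intro x hx y hy hxy
    have hxy' : (x, y) ∈ s ×ˢ s := Finset.mem_product.2 ⟨hx, hy⟩
    rw [ord2_of_ne_zero (sub_ne_zero.2 hxy), WithTop.coe_lt_coe]
    exact (sub_one_lt k).trans_le (hk (Finset.mem_image_of_mem _ hxy'))
  rcases s.eq_empty_or_nonempty with rfl | ⟨a, ha⟩
  · exact ⟨0, k - 1, by simp, hlt⟩
  refine ⟨a + 2 ^ (k - 1), k - 1, fun x hx => ?_, hlt⟩
  rcases eq_or_ne a x with rfl | hax
  · exact ord2_add_two_zpow_sub_self a _
  · exact ord2_add_two_zpow_sub_of_gt (hlt a ha x hx hax)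

section Isolated

variable {X : Type*} [LinearOrder X] [TopologicalSpace X] [OrderTopology X]
  (hiso : ∀ x : X, ¬ IsOpen ({x} : Set X))
include hiso

lemma not_covBy_and_covBy {a b c : X} : ¬ (a ⋖ b ∧ b ⋖ c) := fun h =>
  hiso b (Set.Ioo_eq_singleton_iff.2 h ▸ isOpen_Ioo)

lemma not_isBot_and_covBy {a b : X} : ¬ (IsBot a ∧ a ⋖ b) := fun h =>
  hiso a (Set.Iio_eq_singleton_iff.2 h ▸ isOpen_Iio)

lemma not_isTop_and_covBy {a b : X} : ¬ (IsTop b ∧ a ⋖ b) := fun h =>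
  hiso b (Set.Ioi_eq_singleton_iff.2 h ▸ isOpen_Ioi)

lemma exists_lt_lt_of_isOpen {U : Set X} (hU : IsOpen U) (hne : U.Nonempty) :
    ∃ a ∈ U, ∃ b ∈ U, ∃ c ∈ U, a < b ∧ b < c := by
  obtain ⟨x, hx⟩ := hne
  have : (𝓝[≠] x).NeBot := ⟨fun h => hiso x ((isOpen_singleton_iff_punctured_nhds x).2 h)⟩
  obtain ⟨t, hts, ht⟩ := (infinite_of_mem_nhds x (hU.mem_nhds hx)).exists_subset_card_eq 3
  have hmem := fun i => hts (t.orderEmbOfFin_mem ht i)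
  exact ⟨_, hmem 0, _, hmem 1, _, hmem 2, (t.orderEmbOfFin ht).strictMono (by decide),
    (t.orderEmbOfFin ht).strictMono (by decide)⟩

lemma exists_padded_below (T : Finset X) {x : X} (hbot : ¬ IsBot x) (hcov : ∀ t ∈ T, ¬ t ⋖ x) :
    ∃ z₁ y z₂, z₁ < y ∧ y < z₂ ∧ z₂ < x ∧ ∀ t ∈ T, t < x → t < z₁ := by
  set G : Set X := Set.Iio x ∩ ⋂ t ∈ T.filter (· < x), Set.Ioi t
  have hG : ∀ z, z ∈ G ↔ z < x ∧ ∀ t ∈ T, t < x → t < z := by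
    simp [G]
  have hne : G.Nonempty := by
    by_cases h : (T.filter (· < x)).Nonempty
    · obtain ⟨p, hp, hmax⟩ := (T.filter (· < x)).exists_max_image id h
      rw [Finset.mem_filter] at hp
      obtain ⟨z, hpz, hzx⟩ := (not_covBy_iff hp.2).1 (hcov p hp.1)
      exact ⟨z, (hG z).2 ⟨hzx, fun t ht htx =>
        (hmax t (Finset.mem_filter.2 ⟨ht, htx⟩)).trans_lt hpz⟩⟩
    · obtain ⟨z, hz⟩ : ∃ z, z < x := by simpa [IsBot] using hbot
      exact ⟨z, (hG z).2 ⟨hz, fun t ht htx => absurd ⟨t, Finset.mem_filter.2 ⟨ht, htx⟩⟩ h⟩⟩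
  obtain ⟨z₁, h₁, y, -, z₂, h₂, h₁y, hy₂⟩ := exists_lt_lt_of_isOpen hiso
    (isOpen_Iio.inter (isOpen_biInter_finset fun t _ => isOpen_Ioi)) hne
  exact ⟨z₁, y, z₂, h₁y, hy₂, ((hG _).1 h₂).1, ((hG _).1 h₁).2⟩

end Isolated

section PartialMaps

variable {X : Type*} [LinearOrder X]

/-- Finite partial maps `ℚ → X` are handled through their graphs `S : Finset (ℚ × X)`. -/
def IsBinary (S : Finset (ℚ × X)) : Prop :=
  ∀ a ∈ S, ∀ b ∈ S, ∀ c ∈ S, a.2 < b.2 → b.2 < c.2 → ord2 (a.1 - b.1) ≠ ord2 (b.1 - c.1)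

/-- The gap of `X` just below `m.2` is empty, because of an endpoint or of a jump from a point
outside the ball `{x | k ≤ ord2 (x - m.1)}`. -/
def GapClosedBelow (S : Finset (ℚ × X)) (m : ℚ × X) (k : WithTop ℤ) : Prop :=
  IsBot m.2 ∨ ∃ s ∈ S, s.2 ⋖ m.2 ∧ ord2 (s.1 - m.1) < k

def GapClosedAbove (S : Finset (ℚ × X)) (M : ℚ × X) (k : WithTop ℤ) : Prop :=
  IsTop M.2 ∨ ∃ s ∈ S, M.2 ⋖ s.2 ∧ ord2 (s.1 - M.1) < k

def GapsOpen (S : Finset (ℚ × X)) : Prop :=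
  ∀ m ∈ S, ∀ M ∈ S, m.2 ≤ M.2 →
    GapClosedBelow S m (ord2 (m.1 - M.1)) → ¬ GapClosedAbove S M (ord2 (m.1 - M.1))

structure Extendable (S : Finset (ℚ × X)) : Prop where
  fst_eq_iff : ∀ a ∈ S, ∀ b ∈ S, a.1 = b.1 ↔ a.2 = b.2
  isBinary : IsBinary S
  gapsOpen : GapsOpen S

def IsLeastNearest (S : Finset (ℚ × X)) (q : ℚ) (a : ℚ × X) : Prop :=
  a ∈ S ∧ (∀ s ∈ S, ord2 (q - s.1) ≤ ord2 (q - a.1)) ∧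
    ∀ s ∈ S, ord2 (q - s.1) = ord2 (q - a.1) → a.2 ≤ s.2

def IsGreatestNearest (S : Finset (ℚ × X)) (q : ℚ) (a : ℚ × X) : Prop :=
  IsLeastNearest (X := Xᵒᵈ) S q a

variable {S : Finset (ℚ × X)}

lemma IsBinary.dual (h : IsBinary S) : IsBinary (X := Xᵒᵈ) S := by
  intro a ha b hb c hc hab hbc
  rw [ord2_sub_comm a.1 b.1, ord2_sub_comm b.1 c.1]
  exact (h c hc b hb a ha hbc hab).symm

lemma gapClosedBelow_dual_iff {m : ℚ × X} {k : WithTop ℤ} :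
    GapClosedBelow (X := Xᵒᵈ) S m k ↔ GapClosedAbove S m k := by
  constructor <;> rintro (h | ⟨s, hs, hsm, hk⟩)
  exacts [.inl h, .inr ⟨s, hs, toDual_covBy_toDual_iff.1 hsm, hk⟩,
    .inl h, .inr ⟨s, hs, toDual_covBy_toDual_iff.2 hsm, hk⟩]

lemma gapClosedAbove_dual_iff {M : ℚ × X} {k : WithTop ℤ} :
    GapClosedAbove (X := Xᵒᵈ) S M k ↔ GapClosedBelow S M k := by
  constructor <;> rintro (h | ⟨s, hs, hsm, hk⟩)
  exacts [.inl h, .inr ⟨s, hs, toDual_covBy_toDual_iff.1 hsm, hk⟩,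
    .inl h, .inr ⟨s, hs, toDual_covBy_toDual_iff.2 hsm, hk⟩]

lemma GapsOpen.dual (h : GapsOpen S) : GapsOpen (X := Xᵒᵈ) S := by
  intro m hm M hM hmM hb ha
  rw [ord2_sub_comm] at hb ha
  exact h M hM m hm hmM (gapClosedAbove_dual_iff.1 ha) (gapClosedBelow_dual_iff.1 hb)

lemma Extendable.dual (h : Extendable S) : Extendable (X := Xᵒᵈ) S :=
  ⟨h.fst_eq_iff, h.isBinary.dual, h.gapsOpen.dual⟩

lemma exists_isLeastNearest (hS : S.Nonempty) (q : ℚ) : ∃ a, IsLeastNearest S q a := by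
  obtain ⟨a₀, ha₀, hmax⟩ := S.exists_max_image (fun s => ord2 (q - s.1)) hS
  obtain ⟨a, ha, hmin⟩ := (S.filter fun s => ord2 (q - s.1) = ord2 (q - a₀.1)).exists_min_image
    (·.2) ⟨a₀, Finset.mem_filter.2 ⟨ha₀, rfl⟩⟩
  rw [Finset.mem_filter] at ha
  exact ⟨a, ha.1, fun s hs => ha.2 ▸ hmax s hs,
    fun s hs hsa => hmin s (Finset.mem_filter.2 ⟨hs, hsa.trans ha.2⟩)⟩

lemma IsLeastNearest.ord2_sub_lt {q : ℚ} {a s : ℚ × X} (ha : IsLeastNearest S q a) (hs : s ∈ S)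
    (hsa : s.2 < a.2) : ord2 (q - s.1) < ord2 (q - a.1) :=
  (ha.2.1 s hs).lt_of_ne fun h => (ha.2.2 s hs h).not_gt hsa

lemma fst_eq_iff_insert (hS : Extendable S) {q : ℚ} {y : X} (hq : ∀ s ∈ S, s.1 ≠ q)
    (hy : ∀ s ∈ S, s.2 ≠ y) :
    ∀ a ∈ insert (q, y) S, ∀ b ∈ insert (q, y) S, a.1 = b.1 ↔ a.2 = b.2 := by
  intro a ha b hb
  rcases Finset.mem_insert.1 ha with rfl | ha <;> rcases Finset.mem_insert.1 hb with rfl | hb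
  · exact iff_of_true rfl rfl
  · exact iff_of_false (hq b hb).symm (hy b hb).symm
  · exact iff_of_false (hq a ha) (hy a ha)
  · exact hS.fst_eq_iff a ha b hb

lemma isBinary_insert {p : ℚ × X} (hS : IsBinary S)
    (h₁ : ∀ b ∈ S, ∀ c ∈ S, p.2 < b.2 → b.2 < c.2 → ord2 (p.1 - b.1) ≠ ord2 (b.1 - c.1))
    (h₂ : ∀ a ∈ S, ∀ c ∈ S, a.2 < p.2 → p.2 < c.2 → ord2 (a.1 - p.1) ≠ ord2 (p.1 - c.1))
    (h₃ : ∀ a ∈ S, ∀ b ∈ S, a.2 < b.2 → b.2 < p.2 → ord2 (a.1 - b.1) ≠ ord2 (b.1 - p.1)) :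
    IsBinary (insert p S) := by
  intro a ha b hb c hc hab hbc
  rw [Finset.mem_insert] at ha hb hc
  rcases ha with rfl | ha <;> rcases hb with rfl | hb <;> rcases hc with rfl | hc
  · exact absurd hab (lt_irrefl _)
  · exact absurd hab (lt_irrefl _)
  · exact absurd (hab.trans hbc) (lt_irrefl _)
  · exact h₁ b hb c hc hab hbc
  · exact absurd hbc (lt_irrefl _)
  · exact h₂ a ha c hc hab hbc
  · exact h₃ a ha b hb hab hbc
  · exact hS a ha b hb c hc hab hbc

/-- Seen from a point of `S` outside the block of points nearest to `q`, the new point `q` and the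
anchor `a` are indistinguishable, so every new triple reduces to a triple of `S`. -/
lemma isBinary_insert_below (hS : Extendable S) {q : ℚ} {y : X} {a : ℚ × X}
    (hq : ∀ s ∈ S, s.1 ≠ q) (ha : IsLeastNearest S q a) (hy : ∀ s ∈ S, s.2 < y ↔ s.2 < a.2) :
    IsBinary (insert (q, y) S) := by
  have hdist : ∀ s ∈ S, ord2 (q - s.1) < ord2 (q - a.1) → ord2 (s.1 - q) = ord2 (s.1 - a.1) :=
    fun s _ h => (ord2_sub_eq_of_lt (by rwa [ord2_sub_comm])).symm
  have hlt_of_far : ∀ s ∈ S, ord2 (q - s.1) < ord2 (q - a.1) → ¬ s.2 < y → a.2 < s.2 :=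
    fun s hs h hsy => (not_lt.1 (mt (hy s hs).2 hsy)).lt_of_ne fun h' =>
      h.ne (by rw [(hS.fst_eq_iff a ha.1 s hs).2 h'])
  refine isBinary_insert hS.isBinary (fun b hb c hc hyb hbc h => ?_)
    (fun b hb c hc hby hyc h => ?_) (fun c hc b hb hcb hby h => ?_)
  · have hb_far := (ord2_sub_lt_of_eq (hq b hb).symm h).trans_le (ha.2.1 c hc)
    refine hS.isBinary a ha.1 b hb c hc (hlt_of_far b hb hb_far (not_lt_of_gt hyb)) hbc ?_
    rw [ord2_sub_comm, ← hdist b hb hb_far, ord2_sub_comm, h]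
  · have hb_far := ha.ord2_sub_lt hb ((hy b hb).1 hby)
    have hc_far : ord2 (q - c.1) < ord2 (q - a.1) := by rwa [← h, ord2_sub_comm]
    refine hS.isBinary b hb a ha.1 c hc ((hy b hb).1 hby)
      (hlt_of_far c hc hc_far (not_lt_of_gt hyc)) ?_
    rw [← hdist b hb hb_far, h, ord2_sub_comm a.1, ← hdist c hc hc_far, ord2_sub_comm]
  · have hba := (hy b hb).1 hby
    exact hS.isBinary c hc b hb a ha.1 hcb hba (by rw [h, hdist b hb (ha.ord2_sub_lt hb hba)])

lemma GapClosedBelow.of_insert {p m : ℚ × X} {k : WithTop ℤ}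
    (h : GapClosedBelow (insert p S) m k) (hpm : ¬ p.2 ⋖ m.2) : GapClosedBelow S m k := by
  rcases h with h | ⟨s, hs, hsm, hk⟩
  · exact .inl h
  rcases Finset.mem_insert.1 hs with rfl | hs
  · exact absurd hsm hpm
  · exact .inr ⟨s, hs, hsm, hk⟩

lemma GapClosedAbove.of_insert {p M : ℚ × X} {k : WithTop ℤ}
    (h : GapClosedAbove (insert p S) M k) (hMp : ¬ M.2 ⋖ p.2) : GapClosedAbove S M k := by
  rcases h with h | ⟨s, hs, hMs, hk⟩
  · exact .inl h
  rcases Finset.mem_insert.1 hs with rfl | hs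
  · exact absurd hMs hMp
  · exact .inr ⟨s, hs, hMs, hk⟩

lemma gapsOpen_insert_of_forall_not_covBy (hS : GapsOpen S) {q : ℚ} {y : X} (hbot : ¬ IsBot y)
    (htop : ¬ IsTop y) (hcov : ∀ s ∈ S, ¬ s.2 ⋖ y ∧ ¬ y ⋖ s.2) : GapsOpen (insert (q, y) S) := by
  intro m hm M hM hmM hb ha
  rcases Finset.mem_insert.1 hm with rfl | hm
  · rcases hb with hb | ⟨s, hs, hsy, -⟩
    · exact hbot hb
    rcases Finset.mem_insert.1 hs with rfl | hs
    · exact hsy.lt.false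
    · exact (hcov s hs).1 hsy
  rcases Finset.mem_insert.1 hM with rfl | hM
  · rcases ha with ha | ⟨s, hs, hys, -⟩
    · exact htop ha
    rcases Finset.mem_insert.1 hs with rfl | hs
    · exact hys.lt.false
    · exact (hcov s hs).2 hys
  exact hS m hm M hM hmM (hb.of_insert (hcov m hm).2) (ha.of_insert (hcov M hM).1)

lemma gapsOpen_insert_of_forall_lt (hS : Extendable S) (hbt : ∀ a b : X, IsBot a → ¬ IsTop b)
    {q : ℚ} {y : X} {k : ℤ} (hlt : ∀ s ∈ S, s.2 < y) (hcov : ∀ s ∈ S, ¬ s.2 ⋖ y)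
    (hq : ∀ s ∈ S, ord2 (q - s.1) = k)
    (hk : ∀ s ∈ S, ∀ t ∈ S, s.1 ≠ t.1 → (k : WithTop ℤ) < ord2 (s.1 - t.1)) :
    GapsOpen (insert (q, y) S) := by
  have htop : ∀ l, GapClosedAbove (insert (q, y) S) (q, y) l → IsTop y := by
    rintro l (h | ⟨s, hs, hys, -⟩)
    · exact h
    rcases Finset.mem_insert.1 hs with rfl | hs
    · exact hys.lt.false.elim
    · exact ((hlt s hs).trans hys.lt).false.elim
  intro m hm M hM hmM hb ha
  rcases Finset.mem_insert.1 hm with rfl | hm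
  · rcases Finset.mem_insert.1 hM with rfl | hM
    · refine hbt y y ?_ (htop _ ha)
      rcases hb with hb | ⟨s, hs, hsy, -⟩
      · exact hb
      rcases Finset.mem_insert.1 hs with rfl | hs
      · exact hsy.lt.false.elim
      · exact absurd hsy (hcov s hs)
    · exact (hlt M hM).not_ge hmM
  rcases Finset.mem_insert.1 hM with rfl | hM
  · refine hbt m.2 y ?_ (htop _ ha)
    rcases hb with hb | ⟨s, hs, hsm, hsk⟩
    · exact hb
    rw [ord2_sub_comm m.1 q, hq m hm] at hsk
    rcases Finset.mem_insert.1 hs with rfl | hs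
    · exact ((hlt m hm).trans hsm.lt).false.elim
    · exact ((hk s hs m hm ((hS.fst_eq_iff s hs m hm).not.2 hsm.ne)).trans hsk).false.elim
  exact hS.gapsOpen m hm M hM hmM (hb.of_insert fun h => ((hlt m hm).trans h.lt).false)
    (ha.of_insert (hcov M hM))

lemma isLeastNearest_add_two_zpow (hS : Extendable S) {w : ℚ × X} {K : ℤ} (hw : w ∈ S)
    (hK : ∀ s ∈ S, s.1 ≠ w.1 → ord2 (s.1 - w.1) < K) : IsLeastNearest S (w.1 + 2 ^ K) w := by
  have hnear : ∀ s ∈ S, s.1 = w.1 ∨ ord2 (w.1 + 2 ^ K - s.1) < K := fun s hs =>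
    (eq_or_ne s.1 w.1).imp_right fun h => by
      rw [ord2_add_two_zpow_sub_of_lt] <;> rw [ord2_sub_comm] <;> exact hK s hs h
  refine ⟨hw, fun s hs => ?_, fun s hs h => ?_⟩ <;> rw [ord2_add_two_zpow_sub_self] at *
  · rcases hnear s hs with h | h
    · rw [h, ord2_add_two_zpow_sub_self]
    · exact h.le
  · rcases hnear s hs with h' | h'
    · exact ((hS.fst_eq_iff w hw s hs).1 h'.symm).le
    · exact (h'.ne h).elim

lemma Extendable.insert_add_two_zpow (hS : Extendable S) {w : ℚ × X} {y : X} {K : ℤ}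
    (hw : w ∈ S) (hK : ∀ s ∈ S, s.1 ≠ w.1 → ord2 (s.1 - w.1) < K)
    (hy : ∀ s ∈ S, s.2 < y ↔ s.2 < w.2) (hfresh : ∀ s ∈ S, s.2 ≠ y)
    (hgaps : GapsOpen (insert (w.1 + 2 ^ K, y) S)) : Extendable (insert (w.1 + 2 ^ K, y) S) := by
  have hleast := isLeastNearest_add_two_zpow hS hw hK
  have hq : ∀ s ∈ S, s.1 ≠ w.1 + 2 ^ K := fun s hs h => by
    have := hleast.2.1 s hs
    rw [h, sub_self, ord2_zero, ord2_add_two_zpow_sub_self] at this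
    exact (WithTop.coe_lt_top K).not_ge this
  exact ⟨fst_eq_iff_insert hS hq hfresh, isBinary_insert_below hS hq hleast hy, hgaps⟩

lemma Extendable.insert_of_forall_lt (hS : Extendable S) (hbt : ∀ a b : X, IsBot a → ¬ IsTop b)
    {q : ℚ} {y : X} {k : ℤ} (hlt : ∀ s ∈ S, s.2 < y) (hcov : ∀ s ∈ S, ¬ s.2 ⋖ y)
    (hq : ∀ s ∈ S, ord2 (q - s.1) = k)
    (hk : ∀ s ∈ S, ∀ t ∈ S, s.1 ≠ t.1 → (k : WithTop ℤ) < ord2 (s.1 - t.1)) :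
    Extendable (insert (q, y) S) := by
  refine ⟨fst_eq_iff_insert hS (fun s hs h => ?_) (fun s hs => (hlt s hs).ne), ?_,
    gapsOpen_insert_of_forall_lt hS hbt hlt hcov hq hk⟩
  · have := hq s hs
    rw [h, sub_self, ord2_zero] at this
    exact WithTop.top_ne_coe this
  refine isBinary_insert hS.isBinary (fun b hb _ _ hyb _ => absurd hyb (hlt b hb).not_gt)
    (fun _ _ c hc _ hyc => absurd hyc (hlt c hc).not_gt) (fun a ha b hb hab _ h => ?_)
  rw [ord2_sub_comm b.1 q, hq b hb] at h
  exact (hk a ha b hb ((hS.fst_eq_iff a ha b hb).not.2 hab.ne)).ne' h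

lemma Extendable.insert_of_forall_gt (hS : Extendable S) (hbt : ∀ a b : X, IsBot a → ¬ IsTop b)
    {q : ℚ} {y : X} {k : ℤ} (hgt : ∀ s ∈ S, y < s.2) (hcov : ∀ s ∈ S, ¬ y ⋖ s.2)
    (hq : ∀ s ∈ S, ord2 (q - s.1) = k)
    (hk : ∀ s ∈ S, ∀ t ∈ S, s.1 ≠ t.1 → (k : WithTop ℤ) < ord2 (s.1 - t.1)) :
    Extendable (insert (q, y) S) :=
  (hS.dual.insert_of_forall_lt (X := Xᵒᵈ) (fun a b ha hb => hbt b a hb ha) hgt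
    (fun s hs h => hcov s hs (toDual_covBy_toDual_iff.1 h)) hq hk).dual

lemma IsLeastNearest.gapClosedBelow {q : ℚ} {a : ℚ × X} (ha : IsLeastNearest S q a)
    {k : WithTop ℤ} (hk : ord2 (q - a.1) ≤ k) (h : IsBot a.2 ∨ ∃ s ∈ S, s.2 ⋖ a.2) :
    GapClosedBelow S a k := by
  rcases h with h | ⟨s, hs, hsa⟩
  · exact .inl h
  have hs_far := ha.ord2_sub_lt hs hsa.lt
  refine .inr ⟨s, hs, hsa, ?_⟩
  rw [ord2_sub_eq_of_lt (b := q) (by rwa [ord2_sub_comm]), ord2_sub_comm]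
  exact hs_far.trans_le hk

lemma Extendable.free_below_or_free_above (hS : Extendable S) {q : ℚ} {m M : ℚ × X}
    (hm : IsLeastNearest S q m) (hM : IsGreatestNearest S q M) :
    (¬ IsBot m.2 ∧ ∀ s ∈ S, ¬ s.2 ⋖ m.2) ∨ (¬ IsTop M.2 ∧ ∀ s ∈ S, ¬ M.2 ⋖ s.2) := by
  have hmM : ord2 (q - M.1) = ord2 (q - m.1) := le_antisymm (hm.2.1 M hM.1) (hM.2.1 m hm.1)
  have hscale : ord2 (q - m.1) ≤ ord2 (m.1 - M.1) := by
    simpa [ord2_sub_comm m.1 q, hmM] using min_ord2_sub_le m.1 q M.1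
  by_contra h
  push Not at h
  refine hS.gapsOpen m hm.1 M hM.1 (hM.2.2 m hm.1 hmM.symm)
    (hm.gapClosedBelow hscale ?_) (gapClosedBelow_dual_iff.1 (hM.gapClosedBelow (hmM ▸ hscale) ?_))
  · by_cases hbot : IsBot m.2
    exacts [.inl hbot, .inr (h.1 hbot)]
  · by_cases htop : IsTop M.2
    · exact .inl htop
    obtain ⟨s, hs, hMs⟩ := h.2 htop
    exact .inr ⟨s, hs, toDual_covBy_toDual_iff.2 hMs⟩

end PartialMaps

section Extension

variable {X : Type*} [LinearOrder X] [TopologicalSpace X] [OrderTopology X]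
  (hiso : ∀ x : X, ¬ IsOpen ({x} : Set X)) {S : Finset (ℚ × X)}
include hiso

lemma gapsOpen_insert_of_covBy_anchor (hS : Extendable S) {w : ℚ × X} {y : X} {K : ℤ}
    (hw : w ∈ S) (hyw : y ⋖ w.2) (hK : ∀ s ∈ S, s.1 ≠ w.1 → ord2 (s.1 - w.1) < K) :
    GapsOpen (insert (w.1 + 2 ^ K, y) S) := by
  have hw_eq : ∀ s ∈ S, s.2 = w.2 → s.1 = w.1 := fun s hs h => (hS.fst_eq_iff s hs w hw).2 h
  have hy_low : ∀ a, ¬ a ⋖ y := fun a h => not_covBy_and_covBy hiso ⟨h, hyw⟩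
  have hy_bot : ¬ IsBot y := fun h => not_isBot_and_covBy hiso ⟨h, hyw⟩
  have hw_up : ∀ b, ¬ w.2 ⋖ b := fun b h => not_covBy_and_covBy hiso ⟨hyw, h⟩
  have hw_top : ¬ IsTop w.2 := fun h => not_isTop_and_covBy hiso ⟨h, hyw⟩
  intro m hm M hM hmM hb ha
  rcases Finset.mem_insert.1 hm with rfl | hm
  · rcases hb with hb | ⟨s, -, hsy, -⟩
    exacts [hy_bot hb, hy_low _ hsy]
  rcases Finset.mem_insert.1 hM with rfl | hM
  · -- the only gap above `y` is the jump to `w.2`, at scale `K`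
    rcases ha with ha | ⟨s, hs, hys, hk⟩
    · exact (ha w.2).not_gt hyw.lt
    rcases Finset.mem_insert.1 hs with rfl | hs
    · exact hys.lt.false
    have hmw : m.1 ≠ w.1 := fun h => (hmM.trans_lt hyw.lt).ne ((hS.fst_eq_iff m hm w hw).1 h)
    dsimp only at hk
    rw [hw_eq s hs (hys.unique_right hyw), ord2_sub_comm w.1, ord2_add_two_zpow_sub_self,
      ord2_sub_comm m.1, ord2_add_two_zpow_sub_of_lt (by rw [ord2_sub_comm]; exact hK m hm hmw),
      ord2_sub_comm] at hk
    exact (hk.trans (hK m hm hmw)).false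
  have ha' := ha.of_insert (hy_low _)
  rcases hb with hb | ⟨s, hs, hsm, hk⟩
  · exact hS.gapsOpen m hm M hM hmM (.inl hb) ha'
  rcases Finset.mem_insert.1 hs with rfl | hs
  · -- the new jump is `y ⋖ m.2 = w.2`, at scale `K`
    rw [hw_eq m hm (hsm.unique_right hyw), ord2_add_two_zpow_sub_self] at hk
    by_cases hMw : M.1 = w.1
    · have hMw' := (hS.fst_eq_iff M hM w hw).1 hMw
      rcases ha' with ha' | ⟨s, -, hMs, -⟩
      exacts [hw_top (hMw' ▸ ha'), hw_up _ (hMw' ▸ hMs)]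
    · exact (hk.trans (by rw [ord2_sub_comm]; exact hK M hM hMw)).false
  · exact hS.gapsOpen m hm M hM hmM (.inr ⟨s, hs, hsm, hk⟩) ha'

lemma Extendable.insert_of_covBy_anchor (hS : Extendable S) {w : ℚ × X} {y : X} {K : ℤ}
    (hw : w ∈ S) (hyw : y ⋖ w.2) (hfresh : ∀ s ∈ S, s.2 ≠ y)
    (hK : ∀ s ∈ S, s.1 ≠ w.1 → ord2 (s.1 - w.1) < K) :
    Extendable (insert (w.1 + 2 ^ K, y) S) :=
  hS.insert_add_two_zpow hw hK
    (fun s hs => ⟨fun h => h.trans hyw.lt, fun h => (hyw.le_of_lt h).lt_of_ne (hfresh s hs)⟩)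
    hfresh (gapsOpen_insert_of_covBy_anchor hiso hS hw hyw hK)

lemma Extendable.insert_of_anchor_covBy (hS : Extendable S) {u : ℚ × X} {y : X} {K : ℤ}
    (hu : u ∈ S) (huy : u.2 ⋖ y) (hfresh : ∀ s ∈ S, s.2 ≠ y)
    (hK : ∀ s ∈ S, s.1 ≠ u.1 → ord2 (s.1 - u.1) < K) :
    Extendable (insert (u.1 + 2 ^ K, y) S) :=
  (hS.dual.insert_of_covBy_anchor (X := Xᵒᵈ) (fun x => hiso x) hu
    (toDual_covBy_toDual_iff.2 huy) hfresh hK).dual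

lemma Extendable.exists_insert_below (hS : Extendable S) {q : ℚ} {a : ℚ × X}
    (hq : ∀ s ∈ S, s.1 ≠ q) (ha : IsLeastNearest S q a) (hbot : ¬ IsBot a.2)
    (hcov : ∀ s ∈ S, ¬ s.2 ⋖ a.2) : ∃ y, Extendable (insert (q, y) S) := by
  obtain ⟨z₁, y, z₂, h₁, h₂, h₂a, hz₁⟩ :=
    exists_padded_below hiso (S.image Prod.snd) hbot (Finset.forall_mem_image.2 hcov)
  replace hz₁ : ∀ s ∈ S, s.2 < a.2 → s.2 < z₁ := fun s hs => hz₁ _ (Finset.mem_image_of_mem _ hs)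
  have hsep : ∀ s ∈ S, s.2 < z₁ ∨ z₂ < s.2 := fun s hs =>
    (lt_or_ge s.2 a.2).imp (hz₁ s hs) h₂a.trans_le
  refine ⟨y, fst_eq_iff_insert hS hq fun s hs => ?_, isBinary_insert_below hS hq ha
    fun s hs => ⟨fun h => lt_of_not_ge fun h' => ?_, fun h => (hz₁ s hs h).trans h₁⟩,
    gapsOpen_insert_of_forall_not_covBy hS.gapsOpen (fun h => (h z₁).not_gt h₁)
    (fun h => (h z₂).not_gt h₂) fun s hs => ?_⟩
  · rcases hsep s hs with h | h
    exacts [(h.trans h₁).ne, (h₂.trans h).ne']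
  · exact (h.trans (h₂.trans (h₂a.trans_le h'))).false
  · rcases hsep s hs with h | h
    · exact ⟨fun hc => hc.2 h h₁, fun hc => (hc.lt.trans (h.trans h₁)).false⟩
    · exact ⟨fun hc => (hc.lt.trans (h₂.trans h)).false, fun hc => hc.2 h₂ h⟩

lemma Extendable.exists_insert_above (hS : Extendable S) {q : ℚ} {a : ℚ × X}
    (hq : ∀ s ∈ S, s.1 ≠ q) (ha : IsGreatestNearest S q a) (htop : ¬ IsTop a.2)
    (hcov : ∀ s ∈ S, ¬ a.2 ⋖ s.2) : ∃ y, Extendable (insert (q, y) S) := by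
  obtain ⟨y, hy⟩ := hS.dual.exists_insert_below (X := Xᵒᵈ) (fun x => hiso x) hq ha htop
    fun s hs h => hcov s hs (toDual_covBy_toDual_iff.1 h)
  exact ⟨ofDual y, hy.dual⟩

lemma Extendable.exists_insert_fst [Nonempty X] (hbt : ∀ a b : X, IsBot a → ¬ IsTop b)
    (hS : Extendable S) {q : ℚ} (hq : ∀ s ∈ S, s.1 ≠ q) : ∃ y, Extendable (insert (q, y) S) := by
  rcases S.eq_empty_or_nonempty with rfl | hne
  · obtain ⟨y⟩ := ‹Nonempty X›
    exact ⟨y, hS.insert_of_forall_lt hbt (k := 0) (by simp) (by simp) (by simp) (by simp)⟩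
  obtain ⟨m, hm⟩ := exists_isLeastNearest hne q
  obtain ⟨M, hM⟩ := exists_isLeastNearest (X := Xᵒᵈ) hne q
  rcases hS.free_below_or_free_above hm hM with ⟨hbot, hcov⟩ | ⟨htop, hcov⟩
  exacts [hS.exists_insert_below hiso hq hm hbot hcov, hS.exists_insert_above hiso hq hM htop hcov]

lemma Extendable.exists_insert_snd (hbt : ∀ a b : X, IsBot a → ¬ IsTop b) (hS : Extendable S)
    {y : X} (hy : ∀ s ∈ S, s.2 ≠ y) : ∃ q, Extendable (insert (q, y) S) := by
  have hmem : ∀ s ∈ S, s.1 ∈ S.image Prod.fst := fun s => Finset.mem_image_of_mem _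
  obtain ⟨K, hK⟩ := exists_ord2_sub_lt (S.image Prod.fst)
  replace hK : ∀ a ∈ S, ∀ s ∈ S, s.1 ≠ a.1 → ord2 (s.1 - a.1) < K :=
    fun a ha s hs => hK _ (hmem s hs) _ (hmem a ha)
  obtain ⟨q, k, hq, hk⟩ := exists_ord2_sub_eq (S.image Prod.fst)
  replace hq : ∀ s ∈ S, ord2 (q - s.1) = k := fun s hs => hq _ (hmem s hs)
  replace hk : ∀ s ∈ S, ∀ t ∈ S, s.1 ≠ t.1 → (k : WithTop ℤ) < ord2 (s.1 - t.1) :=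
    fun s hs t ht => hk _ (hmem s hs) _ (hmem t ht)
  by_cases hu : ∃ u ∈ S, u.2 ⋖ y
  · obtain ⟨u, hu, huy⟩ := hu
    exact ⟨_, hS.insert_of_anchor_covBy hiso hu huy hy (hK u hu)⟩
  by_cases hw : ∃ w ∈ S, y ⋖ w.2
  · obtain ⟨w, hw, hyw⟩ := hw
    exact ⟨_, hS.insert_of_covBy_anchor hiso hw hyw hy (hK w hw)⟩
  push Not at hu hw
  by_cases hlt : ∀ s ∈ S, s.2 < y
  · exact ⟨q, hS.insert_of_forall_lt hbt hlt hu hq hk⟩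
  by_cases hgt : ∀ s ∈ S, y < s.2
  · exact ⟨q, hS.insert_of_forall_gt hbt hgt hw hq hk⟩
  push Not at hlt hgt
  obtain ⟨a, ha, hya⟩ := hlt
  obtain ⟨b, hb, hby⟩ := hgt
  obtain ⟨w, hw', hwmin⟩ := (S.filter (y < ·.2)).exists_min_image (·.2)
    ⟨a, Finset.mem_filter.2 ⟨ha, hya.lt_of_ne (hy a ha).symm⟩⟩
  rw [Finset.mem_filter] at hw'
  refine ⟨_, hS.insert_add_two_zpow hw'.1 (hK w hw'.1) (fun s hs => ⟨fun h => h.trans hw'.2,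
    fun h => lt_of_not_ge fun h' => ?_⟩) hy (gapsOpen_insert_of_forall_not_covBy hS.gapsOpen
    (fun h => (h b.2).not_gt (hby.lt_of_ne (hy b hb))) (fun h => (h w.2).not_gt hw'.2)
    fun s hs => ⟨hu s hs, hw s hs⟩)⟩
  exact (hwmin s (Finset.mem_filter.2 ⟨hs, h'.lt_of_ne (hy s hs).symm⟩)).not_gt h

end Extension

section BackAndForth

variable {α β : Type*} [DecidableEq α] [DecidableEq β] [Countable α] [Countable β]
  (P : Finset (α × β) → Prop)

lemma exists_graph_of_forth_back (h₀ : P ∅)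
    (hforth : ∀ S, P S → ∀ a, (∀ p ∈ S, p.1 ≠ a) → ∃ b, P (insert (a, b) S))
    (hback : ∀ S, P S → ∀ b, (∀ p ∈ S, p.2 ≠ b) → ∃ a, P (insert (a, b) S)) :
    ∃ G : Set (α × β), (∀ a, ∃ b, (a, b) ∈ G) ∧ (∀ b, ∃ a, (a, b) ∈ G) ∧
      ∀ T : Finset (α × β), ↑T ⊆ G → ∃ S, P S ∧ T ⊆ S := by
  classical
  have := Encodable.ofCountable α
  have := Encodable.ofCountable β
  let D : α ⊕ β → Order.Cofinal {S // P S} := fun i =>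
    { carrier := {S | ∃ p ∈ S.1, Sum.elim (p.1 = ·) (p.2 = ·) i}
      isCofinal := fun S => by
        by_cases h : ∃ p ∈ S.1, Sum.elim (p.1 = ·) (p.2 = ·) i
        · exact ⟨S, h, le_rfl⟩
        push Not at h
        rcases i with a | b
        · obtain ⟨b, hb⟩ := hforth S.1 S.2 a h
          exact ⟨⟨_, hb⟩, ⟨(a, b), Finset.mem_insert_self _ _, rfl⟩, Finset.subset_insert _ _⟩
        · obtain ⟨a, ha⟩ := hback S.1 S.2 b h
          exact ⟨⟨_, ha⟩, ⟨(a, b), Finset.mem_insert_self _ _, rfl⟩, Finset.subset_insert _ _⟩ }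
  let I := Order.idealOfCofinals ⟨∅, h₀⟩ D
  refine ⟨⋃ S ∈ (I : Set {S // P S}), (S.1 : Set (α × β)), fun a => ?_, fun b => ?_,
    fun T hT => ?_⟩
  · obtain ⟨S, ⟨p, hp, rfl⟩, hS⟩ := Order.cofinal_meets_idealOfCofinals ⟨∅, h₀⟩ D (.inl a)
    exact ⟨p.2, Set.mem_biUnion hS hp⟩
  · obtain ⟨S, ⟨p, hp, rfl⟩, hS⟩ := Order.cofinal_meets_idealOfCofinals ⟨∅, h₀⟩ D (.inr b)
    exact ⟨p.1, Set.mem_biUnion hS hp⟩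
  · obtain ⟨S, -, hS⟩ := DirectedOn.exists_mem_subset_of_finset_subset_biUnion I.nonempty
      (I.directed.mono fun _ _ h => Finset.coe_subset.2 h) hT
    exact ⟨S.1, S.2, Finset.coe_subset.1 hS⟩

theorem exists_bijective_of_forth_back (h₀ : P ∅)
    (hfun : ∀ S, P S → ∀ a ∈ S, ∀ b ∈ S, a.1 = b.1 ↔ a.2 = b.2)
    (hforth : ∀ S, P S → ∀ a, (∀ p ∈ S, p.1 ≠ a) → ∃ b, P (insert (a, b) S))
    (hback : ∀ S, P S → ∀ b, (∀ p ∈ S, p.2 ≠ b) → ∃ a, P (insert (a, b) S)) :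
    ∃ f : α → β, f.Bijective ∧ ∀ s : Finset α, ∃ S, P S ∧ ∀ a ∈ s, (a, f a) ∈ S := by
  obtain ⟨G, hdom, hran, hfin⟩ := exists_graph_of_forth_back P h₀ hforth hback
  have hpair : ∀ p ∈ G, ∀ p' ∈ G, p.1 = p'.1 ↔ p.2 = p'.2 := fun p hp p' hp' => by
    obtain ⟨S, hS, hsub⟩ := hfin {p, p'} (by simp [Set.insert_subset_iff, hp, hp'])
    exact hfun S hS p (hsub (by simp)) p' (hsub (by simp))
  choose f hf using hdom
  refine ⟨f, ⟨fun a a' h => (hpair _ (hf a) _ (hf a')).2 h, fun b => ?_⟩, fun s => ?_⟩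
  · obtain ⟨a, ha⟩ := hran b
    exact ⟨a, (hpair _ (hf a) _ ha).1 rfl⟩
  · obtain ⟨S, hS, hsub⟩ := hfin (s.image fun a => (a, f a))
      (by simpa [Set.subset_def] using fun a _ => hf a)
    exact ⟨S, hS, fun a ha => hsub (Finset.mem_image_of_mem _ ha)⟩

end BackAndForth

/-- Let (X, ⪯) be a countably infinite totally ordered set with no isolated
points such that either X does not have a maximum or X does not have a minimum. Then
there exists a binary bijection f : ℚ → X. -/
theorem stmt_19 {X : Type*} [LinearOrder X] [TopologicalSpace X] [OrderTopology X]
    [Countable X] [Infinite X] (hiso : ∀ x : X, ¬ IsOpen ({x} : Set X))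
    (hmm : (¬ ∃ m : X, ∀ x : X, x ≤ m) ∨ (¬ ∃ m : X, ∀ x : X, m ≤ x)) :
    ∃ f : ℚ → X, Function.Bijective f ∧
      ¬ ∃ a b c : ℚ, f a < f b ∧ f b < f c ∧ ord2 (b - a) = ord2 (c - b) := by
  have hbt : ∀ a b : X, IsBot a → ¬ IsTop b := by
    rcases hmm with h | h
    exacts [fun _ b _ hb => h ⟨b, hb⟩, fun a _ ha _ => h ⟨a, ha⟩]
  obtain ⟨f, hf, hfin⟩ := exists_bijective_of_forth_back Extendable
    ⟨by simp, by simp [IsBinary], by simp [GapsOpen]⟩ (fun _ hS => hS.fst_eq_iff)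
    (fun _ hS _ hq => hS.exists_insert_fst hiso hbt hq)
    (fun _ hS _ hy => hS.exists_insert_snd hiso hbt hy)
  refine ⟨f, hf, fun ⟨a, b, c, hab, hbc, h⟩ => ?_⟩
  obtain ⟨S, hS, hmem⟩ := hfin {a, b, c}
  exact hS.isBinary _ (hmem a (by simp)) _ (hmem b (by simp)) _ (hmem c (by simp)) hab hbc
    (by rw [ord2_sub_comm a b]; exact h.trans (ord2_sub_comm c b))
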